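/- Let G be a uniquely C4+-saturated graph with at least one triangle, and let A be the set of all vertices belonging to some triangle of G. Then every vertex of G is in A or adjacent to a vertex of A (i.e., no vertex is at distance 2 or more from A). -/

import Mathlib

open SimpleGraph

/-- The diamond graph `C₄⁺`: a `4`-cycle with one chord, i.e. `K₄` minus an edge. -/
def diamond : SimpleGraph (Fin 4) := (⊤ : SimpleGraph (Fin 4)).deleteEdges {s(0, 1)}

/-- `G'` is a copy of `H` in `G`, i.e. a subgraph of `G` isomorphic to `H`. -/
def IsCopy {W V : Type*} (H : SimpleGraph W) {G : SimpleGraph V} (G' : G.Subgraph) : Prop :=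
  Nonempty (G'.coe ≃g H)

/-- `G` is uniquely `H`-saturated: `G` is `H`-free, and adding any non-edge
creates exactly one copy of `H`. -/
def UniquelySaturated {W V : Type*} (H : SimpleGraph W) (G : SimpleGraph V) : Prop :=
  (∀ G' : G.Subgraph, ¬ IsCopy H G') ∧
    ∀ u v : V, u ≠ v → ¬ G.Adj u v →
      ∃! G' : (G ⊔ SimpleGraph.fromEdgeSet {s(u, v)}).Subgraph, IsCopy H G'

/-- The set of vertices belonging to some triangle of `G`. -/
def triangleVerts {V : Type*} (G : SimpleGraph V) : Set V :=
  {v | ∃ a b, G.Adj v a ∧ G.Adj v b ∧ G.Adj a b}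

/-! Let `v` be a vertex that neither lies in a triangle nor is adjacent to one, and let `abc` be a
triangle. Diamond-freeness means that adjacent vertices have at most one common neighbour, and
uniqueness of the diamond created by a non-edge `uw` means that `u` and `w` have at most two.
Adding `va` creates a diamond, which can only have `va` as its chord, so `v` and `a` have exactly
two common neighbours `x` and `y`. Uniqueness of created diamonds then yields injections
`N(v) \ {x} → N(x) \ N[v]` and `N(x) \ N[v] \ {a} → N(a) \ N[v] \ {b, c}`, while double
counting the edges between `N(a) \ N[v]` and `N(v)` (at least two at each vertex of the former,
at most two at each vertex of the latter and at most one at `x` and at `y`) gives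
`|N(a) \ N[v]| < |N(v)|`. Hence `|N(v)| ≤ |N(x) \ N[v]| + 1 ≤ |N(a) \ N[v]| < |N(v)|`. -/

open Finset

lemma isCopy_iff_exists_copy {W V : Type*} {H : SimpleGraph W} {G : SimpleGraph V}
    (G' : G.Subgraph) : IsCopy H G' ↔ ∃ f : Copy H G, f.toSubgraph = G' := by
  have h := congrArg (G' ∈ ·) (Copy.range_toSubgraph (A := H) (B := G))
  simp only [Set.mem_range, Set.mem_ofPred_eq, eq_iff_iff] at h
  rw [h]
  exact ⟨fun ⟨e⟩ => ⟨e.symm⟩, fun ⟨e⟩ => ⟨e.symm⟩⟩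

lemma sup_fromEdgeSet_adj_of_adj {V : Type*} {G : SimpleGraph V} {u w p q : V}
    (h : G.Adj p q) : (G ⊔ fromEdgeSet {s(u, w)}).Adj p q :=
  Or.inl h

lemma sup_fromEdgeSet_adj_self {V : Type*} {G : SimpleGraph V} {u w : V} (huw : u ≠ w) :
    (G ⊔ fromEdgeSet {s(u, w)}).Adj u w :=
  Or.inr ⟨rfl, huw⟩

lemma mem_triangleVerts {V : Type*} {G : SimpleGraph V} {u v w : V} (huv : G.Adj u v)
    (huw : G.Adj u w) (hvw : G.Adj v w) : u ∈ triangleVerts G :=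
  ⟨v, w, huv, huw, hvw⟩

namespace UniquelySaturated

variable {W V : Type*} {H : SimpleGraph W} {G : SimpleGraph V} {u w : V}

lemma isEmpty_copy (hG : UniquelySaturated H G) : IsEmpty (Copy H G) :=
  ⟨fun f => hG.1 f.toSubgraph ((isCopy_iff_exists_copy _).2 ⟨f, rfl⟩)⟩

lemma nonempty_copy_sup (hG : UniquelySaturated H G) (huw : u ≠ w) (hn : ¬G.Adj u w) :
    Nonempty (Copy H (G ⊔ fromEdgeSet {s(u, w)})) := by
  obtain ⟨G', hG', -⟩ := hG.2 u w huw hn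
  obtain ⟨f, -⟩ := (isCopy_iff_exists_copy G').1 hG'
  exact ⟨f⟩

lemma range_eq (hG : UniquelySaturated H G) (huw : u ≠ w) (hn : ¬G.Adj u w)
    (f g : Copy H (G ⊔ fromEdgeSet {s(u, w)})) : Set.range f = Set.range g := by
  have hfg : f.toSubgraph = g.toSubgraph :=
    (hG.2 u w huw hn).unique ((isCopy_iff_exists_copy _).2 ⟨f, rfl⟩)
      ((isCopy_iff_exists_copy _).2 ⟨g, rfl⟩)
  simpa using congrArg Subgraph.verts hfg

end UniquelySaturated

lemma diamond_adj (i j : Fin 4) :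
    diamond.Adj i j ↔ i ≠ j ∧ ¬(i = 0 ∧ j = 1) ∧ ¬(i = 1 ∧ j = 0) := by
  simp only [diamond, deleteEdges_adj, top_adj, Set.mem_singleton_iff, Sym2.eq_iff]
  tauto

instance : DecidableRel diamond.Adj := fun i j => decidable_of_iff _ (diamond_adj i j).symm

lemma diamond_exists_triangle_of_adj : ∀ i j : Fin 4, diamond.Adj i j → ∃ k l, k ≠ l ∧
    l ≠ i ∧ l ≠ j ∧ diamond.Adj i k ∧ diamond.Adj j k ∧ (diamond.Adj l i ∧ diamond.Adj l j ∨
      diamond.Adj l j ∧ diamond.Adj l k ∨ diamond.Adj l i ∧ diamond.Adj l k) := by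
  decide

def diamondCopy {V : Type*} {H : SimpleGraph V} {p₀ p₁ p₂ p₃ : V} (h₀₁ : p₀ ≠ p₁)
    (h₀₂ : H.Adj p₀ p₂) (h₀₃ : H.Adj p₀ p₃) (h₁₂ : H.Adj p₁ p₂) (h₁₃ : H.Adj p₁ p₃)
    (h₂₃ : H.Adj p₂ p₃) : Copy diamond H where
  toHom := ⟨![p₀, p₁, p₂, p₃], fun {i j} h => by
    rw [diamond_adj] at h
    fin_cases i <;> fin_cases j <;> simp_all [H.adj_comm]⟩
  injective' i j h := by
    fin_cases i <;> fin_cases j <;> simp_all [h₀₂.ne, h₀₃.ne, h₁₂.ne, h₁₃.ne, h₂₃.ne, Ne.symm]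

@[simp]
lemma coe_diamondCopy {V : Type*} {H : SimpleGraph V} {p₀ p₁ p₂ p₃ : V} (h₀₁ : p₀ ≠ p₁)
    (h₀₂ : H.Adj p₀ p₂) (h₀₃ : H.Adj p₀ p₃) (h₁₂ : H.Adj p₁ p₂) (h₁₃ : H.Adj p₁ p₃)
    (h₂₃ : H.Adj p₂ p₃) : ⇑(diamondCopy h₀₁ h₀₂ h₀₃ h₁₂ h₁₃ h₂₃) = ![p₀, p₁, p₂, p₃] :=
  rfl

namespace UniquelySaturated

variable {V : Type*} {G : SimpleGraph V} {u w p q r v x y a b c β : V}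

lemma exists_diamond_of_not_adj (hG : UniquelySaturated diamond G) (huw : u ≠ w)
    (hn : ¬G.Adj u w) : ∃ t s, t ≠ s ∧ G.Adj u t ∧ G.Adj w t ∧
      (G.Adj s u ∧ G.Adj s w ∨ G.Adj s w ∧ G.Adj s t ∨ G.Adj s u ∧ G.Adj s t) := by
  obtain ⟨f⟩ := hG.nonempty_copy_sup huw hn
  have hf : ∀ i j, diamond.Adj i j → G.Adj (f i) (f j) ∨ f i = u ∧ f j = w ∨ f i = w ∧ f j = u :=
    fun i j hij => by
      have := f.toHom.map_adj hij
      simp only [sup_adj, fromEdgeSet_adj, Set.mem_singleton_iff, Sym2.eq_iff] at this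
      tauto
  -- `G` itself is diamond-free, so the copy uses the new edge
  have hnew : ∃ i j, diamond.Adj i j ∧ f i = u ∧ f j = w := by
    by_contra! h
    refine hG.isEmpty_copy.false ⟨⟨f, fun {i j} hij => ?_⟩, f.injective⟩
    rcases hf i j hij with h' | ⟨hi, hj⟩ | ⟨hi, hj⟩
    exacts [h', absurd hj (h i j hij hi), absurd hi (h j i hij.symm hj)]
  have hinj := f.injective
  generalize ⇑f = φ at hinj hf hnew
  obtain ⟨i, j, hij, rfl, rfl⟩ := hnew
  have hG' : ∀ m n, diamond.Adj m n → m ≠ i → m ≠ j → G.Adj (φ m) (φ n) := by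
    intro m n hmn hmi hmj
    rcases hf m n hmn with h' | ⟨hm, -⟩ | ⟨hm, -⟩
    exacts [h', absurd (hinj hm) hmi, absurd (hinj hm) hmj]
  obtain ⟨k, l, hkl, hli, hlj, hik, hjk, hl⟩ := diamond_exists_triangle_of_adj i j hij
  have hki : k ≠ i := hik.ne.symm
  have hkj : k ≠ j := hjk.ne.symm
  refine ⟨φ k, φ l, hinj.ne hkl, (hG' k i hik.symm hki hkj).symm,
    (hG' k j hjk.symm hki hkj).symm, ?_⟩
  rcases hl with ⟨h₁, h₂⟩ | ⟨h₁, h₂⟩ | ⟨h₁, h₂⟩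
  · exact Or.inl ⟨hG' l i h₁ hli hlj, hG' l j h₂ hli hlj⟩
  · exact Or.inr (Or.inl ⟨hG' l j h₁ hli hlj, hG' l k h₂ hli hlj⟩)
  · exact Or.inr (Or.inr ⟨hG' l i h₁ hli hlj, hG' l k h₂ hli hlj⟩)

lemma range_eq_of_mem_commonNeighbors (hG : UniquelySaturated diamond G) (huw : u ≠ w)
    (hn : ¬G.Adj u w) (hpq : p ≠ q) (hp : p ∈ G.commonNeighbors u w)
    (hq : q ∈ G.commonNeighbors u w) (f : Copy diamond (G ⊔ fromEdgeSet {s(u, w)})) :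
    Set.range f = {p, q, u, w} := by
  rw [hG.range_eq huw hn f (diamondCopy hpq (sup_fromEdgeSet_adj_of_adj hp.1.symm)
    (sup_fromEdgeSet_adj_of_adj hp.2.symm) (sup_fromEdgeSet_adj_of_adj hq.1.symm)
    (sup_fromEdgeSet_adj_of_adj hq.2.symm) (sup_fromEdgeSet_adj_self huw))]
  ext z
  simp only [coe_diamondCopy, Matrix.range_cons, Matrix.range_empty, Set.union_empty,
    Set.mem_union, Set.mem_singleton_iff, Set.mem_insert_iff]

lemma commonNeighbors_subsingleton (hG : UniquelySaturated diamond G) (huw : G.Adj u w) :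
    (G.commonNeighbors u w).Subsingleton := by
  intro p hp q hq
  by_contra hpq
  exact hG.isEmpty_copy.false (diamondCopy hpq hp.1.symm hp.2.symm hq.1.symm hq.2.symm huw)

lemma eq_or_eq_of_mem_commonNeighbors (hG : UniquelySaturated diamond G) (huw : u ≠ w)
    (hn : ¬G.Adj u w) (hpq : p ≠ q) (hp : p ∈ G.commonNeighbors u w)
    (hq : q ∈ G.commonNeighbors u w) (hr : r ∈ G.commonNeighbors u w) : r = p ∨ r = q := by
  obtain rfl | hpr := eq_or_ne p r
  · exact Or.inl rfl
  have hrange := hG.range_eq_of_mem_commonNeighbors huw hn hpq hp hq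
    (diamondCopy hpr (sup_fromEdgeSet_adj_of_adj hp.1.symm)
      (sup_fromEdgeSet_adj_of_adj hp.2.symm) (sup_fromEdgeSet_adj_of_adj hr.1.symm)
      (sup_fromEdgeSet_adj_of_adj hr.2.symm) (sup_fromEdgeSet_adj_self huw))
  have hr' : r ∈ ({p, q, u, w} : Set V) := hrange ▸ ⟨1, rfl⟩
  simp only [Set.mem_insert_iff, Set.mem_singleton_iff] at hr'
  rcases hr' with h | h | rfl | rfl
  exacts [Or.inl h, Or.inr h, (G.irrefl hr.1).elim, (G.irrefl hr.2).elim]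

lemma eq_or_eq_of_mem_commonNeighbors_of_triangle (hG : UniquelySaturated diamond G)
    (huw : u ≠ w) (hn : ¬G.Adj u w) (hup : G.Adj u p) (hpw : G.Adj p w) (hpr : G.Adj p r)
    (hwr : G.Adj w r) (hq : q ∈ G.commonNeighbors u w) : q = p ∨ q = r := by
  obtain rfl | hpq := eq_or_ne p q
  · exact Or.inl rfl
  have hur : u ≠ r := by
    rintro rfl
    exact hn hwr.symm
  -- `u r p w` is a diamond with chord `pw`, and `p q u w` one with chord `uw`
  have hrange := hG.range_eq_of_mem_commonNeighbors huw hn hpq ⟨hup, hpw.symm⟩ hq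
    (diamondCopy hur (sup_fromEdgeSet_adj_of_adj hup) (sup_fromEdgeSet_adj_self huw)
      (sup_fromEdgeSet_adj_of_adj hpr.symm) (sup_fromEdgeSet_adj_of_adj hwr.symm)
      (sup_fromEdgeSet_adj_of_adj hpw))
  have hr : r ∈ ({p, q, u, w} : Set V) := hrange ▸ ⟨1, rfl⟩
  simp only [Set.mem_insert_iff, Set.mem_singleton_iff] at hr
  rcases hr with rfl | rfl | rfl | rfl
  exacts [(G.irrefl hpr).elim, Or.inr rfl, absurd rfl hur, (G.irrefl hwr).elim]

lemma exists_two_mem_commonNeighbors (hG : UniquelySaturated diamond G)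
    (hu : u ∉ triangleVerts G) (huA : ∀ t ∈ triangleVerts G, ¬G.Adj u t) (huw : u ≠ w)
    (hn : ¬G.Adj u w) :
    ∃ p q, p ≠ q ∧ p ∈ G.commonNeighbors u w ∧ q ∈ G.commonNeighbors u w := by
  obtain ⟨t, s, hts, hut, hwt, hs⟩ := hG.exists_diamond_of_not_adj huw hn
  rcases hs with ⟨hsu, hsw⟩ | ⟨hsw, hst⟩ | ⟨hsu, hst⟩
  · exact ⟨t, s, hts, ⟨hut, hwt⟩, ⟨hsu.symm, hsw.symm⟩⟩
  · exact absurd hut (huA t (mem_triangleVerts hwt.symm hst.symm hsw.symm))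
  · exact absurd (mem_triangleVerts hut hsu.symm hst.symm) hu

lemma exists_ne_mem_commonNeighbors (hG : UniquelySaturated diamond G) (huw : u ≠ w)
    (hn : ¬G.Adj u w) (hq : q ∈ G.commonNeighbors u w) (hqA : q ∉ triangleVerts G) :
    ∃ p ∈ G.commonNeighbors u w, p ≠ q := by
  obtain ⟨t, s, hts, hut, hwt, hs⟩ := hG.exists_diamond_of_not_adj huw hn
  rcases hs with ⟨hsu, hsw⟩ | ⟨hsw, hst⟩ | ⟨hsu, hst⟩
  · obtain rfl | htq := eq_or_ne t q
    · exact ⟨s, ⟨hsu.symm, hsw.symm⟩, hts.symm⟩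
    · exact ⟨t, ⟨hut, hwt⟩, htq⟩
  · rcases hG.eq_or_eq_of_mem_commonNeighbors_of_triangle huw hn hut hwt.symm hst.symm
      hsw.symm hq with rfl | rfl
    · exact absurd (mem_triangleVerts hwt.symm hst.symm hsw.symm) hqA
    · exact absurd (mem_triangleVerts hsw hst hwt) hqA
  · rw [commonNeighbors_symm] at hq
    rcases hG.eq_or_eq_of_mem_commonNeighbors_of_triangle huw.symm (fun h => hn h.symm) hwt
      hut.symm hst.symm hsu.symm hq with rfl | rfl
    · exact absurd (mem_triangleVerts hut.symm hst.symm hsu.symm) hqA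
    · exact absurd (mem_triangleVerts hsu hst hut) hqA

lemma card_le_two_of_subset_commonNeighbors (hG : UniquelySaturated diamond G) (huw : u ≠ w)
    (hn : ¬G.Adj u w) {t : Finset V} (ht : ↑t ⊆ G.commonNeighbors u w) : #t ≤ 2 := by
  by_contra! h
  obtain ⟨p, q, r, hp, hq, hr, hpq, hpr, hqr⟩ := two_lt_card_iff.1 h
  rcases hG.eq_or_eq_of_mem_commonNeighbors huw hn hpq (ht hp) (ht hq) (ht hr) with rfl | rfl
  exacts [hpr rfl, hqr rfl]

lemma card_le_one_of_subset_commonNeighbors (hG : UniquelySaturated diamond G) (huw : G.Adj u w)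
    {t : Finset V} (ht : ↑t ⊆ G.commonNeighbors u w) : #t ≤ 1 :=
  card_le_one.2 fun _ hp _ hq => hG.commonNeighbors_subsingleton huw (ht hp) (ht hq)

lemma eq_of_mem_commonNeighbors_of_adj_triangle (hG : UniquelySaturated diamond G)
    (hxA : x ∉ triangleVerts G) (hxa : G.Adj x a) (hab : G.Adj a b) (hac : G.Adj a c)
    (hbc : G.Adj b c) (hβ : β ∈ G.commonNeighbors x b) : β = a := by
  have hbA := mem_triangleVerts hab.symm hbc hac
  rcases hG.eq_or_eq_of_mem_commonNeighbors_of_triangle (fun (h : x = b) => hxA (h ▸ hbA))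
    (fun h => hxA (mem_triangleVerts hxa h hab)) hxa hab hac hbc hβ with h | rfl
  · exact h
  · exact absurd (mem_triangleVerts hxa hβ.1 hac) hxA

lemma exists_mem_commonNeighbors_not_adj (hG : UniquelySaturated diamond G)
    (hv : v ∉ triangleVerts G) (hvA : ∀ t ∈ triangleVerts G, ¬G.Adj v t)
    (hx : x ∈ G.commonNeighbors v a) (hy : y ∈ G.commonNeighbors v a) (hxy : x ≠ y)
    (hab : G.Adj a b) (hac : G.Adj a c) (hbc : G.Adj b c) (hxβ : G.Adj x β) (hβa : β ≠ a)
    (hβv : β ≠ v) : ∃ w ∈ G.commonNeighbors a β, ¬G.Adj v w ∧ w ≠ b ∧ w ≠ c := by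
  have ha : a ∈ triangleVerts G := mem_triangleVerts hab hac hbc
  have hxA : x ∉ triangleVerts G := fun h => hvA x h hx.1
  obtain ⟨w, hw, hwx⟩ := hG.exists_ne_mem_commonNeighbors hβa.symm
    (fun h => hxA (mem_triangleVerts hx.2.symm hxβ h)) ⟨hx.2, hxβ.symm⟩ hxA
  refine ⟨w, hw, fun hvw => ?_, ?_, ?_⟩
  · -- `v, a` have only the common neighbours `x, y`, and `x, y` only `v, a`
    have hva : v ≠ a := fun h => hv (h ▸ ha)
    rcases hG.eq_or_eq_of_mem_commonNeighbors hva (hvA a ha) hxy hx hy ⟨hvw, hw.1⟩ with rfl | rfl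
    · exact hwx rfl
    rcases hG.eq_or_eq_of_mem_commonNeighbors hxy (fun h => hv (mem_triangleVerts hx.1 hy.1 h))
      hva ⟨hx.1.symm, hy.1.symm⟩ ⟨hx.2.symm, hy.2.symm⟩ ⟨hxβ, hw.2.symm⟩ with h | h
    exacts [hβv h, hβa h]
  · rintro rfl
    exact hβa (hG.eq_of_mem_commonNeighbors_of_adj_triangle hxA hx.2.symm hab hac hbc
      ⟨hxβ, hw.2.symm⟩)
  · rintro rfl
    exact hβa (hG.eq_of_mem_commonNeighbors_of_adj_triangle hxA hx.2.symm hac hab hbc.symm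
      ⟨hxβ, hw.2.symm⟩)

end UniquelySaturated

lemma Finset.sum_add_two_le_two_mul_card {α : Type*} [DecidableEq α] {s : Finset α}
    {f : α → ℕ} {x y : α} (hx : x ∈ s) (hy : y ∈ s) (hxy : x ≠ y) (hf : ∀ z ∈ s, f z ≤ 2)
    (hfx : f x ≤ 1) (hfy : f y ≤ 1) : ∑ z ∈ s, f z + 2 ≤ 2 * #s := by
  have hy' : y ∈ s.erase x := mem_erase.2 ⟨hxy.symm, hy⟩
  have hrest : ∑ z ∈ (s.erase x).erase y, f z ≤ #((s.erase x).erase y) * 2 := by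
    simpa using sum_le_card_nsmul _ f 2 fun z hz => hf z (mem_of_mem_erase (mem_of_mem_erase hz))
  have hcard₁ := card_erase_add_one hx
  have hcard₂ := card_erase_add_one hy'
  rw [← add_sum_erase s f hx, ← add_sum_erase _ f hy']
  omega

def SimpleGraph.closedNeighborFinset {V : Type*} [Fintype V] [DecidableEq V]
    (G : SimpleGraph V) [DecidableRel G.Adj] (v : V) : Finset V :=
  insert v (G.neighborFinset v)

lemma SimpleGraph.mem_closedNeighborFinset {V : Type*} [Fintype V] [DecidableEq V]
    {G : SimpleGraph V} [DecidableRel G.Adj] {v z : V} :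
    z ∈ G.closedNeighborFinset v ↔ z = v ∨ G.Adj v z := by
  simp [closedNeighborFinset]

namespace UniquelySaturated

variable {V : Type*} [Fintype V] [DecidableEq V] {G : SimpleGraph V} [DecidableRel G.Adj]
  {v x y a b c : V}

lemma card_neighborFinset_le_card_sdiff_add_one (hG : UniquelySaturated diamond G)
    (hv : v ∉ triangleVerts G) (hvx : G.Adj v x) :
    #(G.neighborFinset v) ≤ #(G.neighborFinset x \ G.closedNeighborFinset v) + 1 := by
  have hK : ∀ s ∈ (G.neighborFinset v).erase x, s ≠ x ∧ G.Adj v s := by simp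
  have hm : ∀ s ∈ (G.neighborFinset v).erase x, ∃ m ∈ G.commonNeighbors x s, m ≠ v := by
    intro s hs
    obtain ⟨hsx, hvs⟩ := hK s hs
    exact hG.exists_ne_mem_commonNeighbors hsx.symm (fun h => hv (mem_triangleVerts hvx hvs h))
      ⟨hvx.symm, hvs.symm⟩ hv
  choose! m hmx hmv using hm
  have hvm : ∀ s ∈ (G.neighborFinset v).erase x, ¬G.Adj v (m s) := fun s hs hvms =>
    hv (mem_triangleVerts (hK s hs).2 hvms (hmx s hs).2)
  rw [← card_erase_add_one ((G.mem_neighborFinset _ _).2 hvx)]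
  refine Nat.add_le_add_right (card_le_card_of_injOn m (fun s hs => ?_)
    (fun s hs s' hs' hss' => ?_)) 1
  · simpa [mem_closedNeighborFinset, hmv s hs, hvm s hs] using (hmx s hs).1
  · -- otherwise `s`, `s'` and `x` are three common neighbours of `v` and `m s`
    by_contra hne
    have hcommon : ∀ t ∈ (G.neighborFinset v).erase x, m t = m s → t ∈ G.commonNeighbors v (m s) :=
      fun t ht hts => ⟨(hK t ht).2, hts ▸ (hmx t ht).2.symm⟩
    rcases hG.eq_or_eq_of_mem_commonNeighbors (hmv s hs).symm (hvm s hs) hne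
      (hcommon s hs rfl) (hcommon s' hs' hss'.symm) ⟨hvx, (hmx s hs).1.symm⟩ with h | h
    exacts [(hK s hs).1 h.symm, (hK s' hs').1 h.symm]

lemma card_sdiff_closedNeighborFinset_add_one_le (hG : UniquelySaturated diamond G)
    (hv : v ∉ triangleVerts G) (hvA : ∀ t ∈ triangleVerts G, ¬G.Adj v t)
    (hx : x ∈ G.commonNeighbors v a) (hy : y ∈ G.commonNeighbors v a) (hxy : x ≠ y)
    (hab : G.Adj a b) (hac : G.Adj a c) (hbc : G.Adj b c) :
    #(G.neighborFinset x \ G.closedNeighborFinset v) + 1 ≤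
      #(G.neighborFinset a \ G.closedNeighborFinset v) := by
  have hA : ∀ {t}, t ∈ triangleVerts G → t ≠ v ∧ ¬G.Adj v t := fun ht =>
    ⟨fun h => hv (h ▸ ht), hvA _ ht⟩
  have ha : a ∈ triangleVerts G := mem_triangleVerts hab hac hbc
  have hxA : x ∉ triangleVerts G := fun h => hvA x h hx.1
  set E := (G.neighborFinset x \ G.closedNeighborFinset v).erase a
  have hE : ∀ β ∈ E, β ≠ a ∧ G.Adj x β ∧ β ≠ v := by
    simp +contextual [E, mem_closedNeighborFinset]
  have hw : ∀ β ∈ E, ∃ w ∈ G.commonNeighbors a β, ¬G.Adj v w ∧ w ≠ b ∧ w ≠ c := fun β hβ =>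
    hG.exists_mem_commonNeighbors_not_adj hv hvA hx hy hxy hab hac hbc (hE β hβ).2.1
      (hE β hβ).1 (hE β hβ).2.2
  choose! g hga hgv hgb hgc using hw
  have hinj : #E ≤ #(((G.neighborFinset a \ G.closedNeighborFinset v).erase b).erase c) := by
    refine card_le_card_of_injOn g (fun β hβ => ?_) (fun β hβ β' hβ' hgg => ?_)
    · have hgva : g β ≠ v := fun h => (hA ha).2 (h ▸ (hga β hβ).1.symm)
      simpa [mem_closedNeighborFinset, hgb β hβ, hgc β hβ, hgv β hβ, hgva] using (hga β hβ).1
    · -- otherwise `β`, `β'` and `a` are three common neighbours of `x` and `g β`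
      by_contra hne
      have hxg : x ≠ g β := fun h => hgv β hβ (h ▸ hx.1)
      have hnxg : ¬G.Adj x (g β) := fun h => hxA (mem_triangleVerts hx.2.symm h (hga β hβ).1)
      rcases hG.eq_or_eq_of_mem_commonNeighbors hxg hnxg hne
        ⟨(hE β hβ).2.1, (hga β hβ).2.symm⟩ ⟨(hE β' hβ').2.1, hgg ▸ (hga β' hβ').2.symm⟩
        ⟨hx.2.symm, (hga β hβ).1.symm⟩ with h | h
      exacts [(hE β hβ).1 h.symm, (hE β' hβ').1 h.symm]
  have hS : ∀ {t}, G.Adj a t → t ∈ triangleVerts G →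
      t ∈ G.neighborFinset a \ G.closedNeighborFinset v := fun hat ht => by
    simpa [mem_closedNeighborFinset] using ⟨hat, hA ht⟩
  have haN : a ∈ G.neighborFinset x \ G.closedNeighborFinset v := by
    simpa [mem_closedNeighborFinset] using ⟨hx.2.symm, hA ha⟩
  have hbS := hS hab (mem_triangleVerts hab.symm hbc hac)
  have hcS := mem_erase.2 ⟨hbc.ne.symm, hS hac (mem_triangleVerts hac.symm hbc.symm hab)⟩
  have : #E + 1 = _ := card_erase_add_one haN
  have := card_erase_add_one hbS
  have := card_erase_add_one hcS
  omega

lemma card_sdiff_closedNeighborFinset_lt (hG : UniquelySaturated diamond G)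
    (hv : v ∉ triangleVerts G) (hvA : ∀ t ∈ triangleVerts G, ¬G.Adj v t) (hva : ¬G.Adj v a)
    (hx : x ∈ G.commonNeighbors v a) (hy : y ∈ G.commonNeighbors v a) (hxy : x ≠ y) :
    #(G.neighborFinset a \ G.closedNeighborFinset v) < #(G.neighborFinset v) := by
  set S := G.neighborFinset a \ G.closedNeighborFinset v
  set K := G.neighborFinset v
  have hbelow : ∀ w ∈ S, 2 ≤ #(K.bipartiteBelow G.Adj w) := by
    intro w hw
    obtain ⟨-, hwv, hvw⟩ : G.Adj a w ∧ w ≠ v ∧ ¬G.Adj v w := by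
      simpa [S, mem_closedNeighborFinset] using hw
    obtain ⟨p, q, hpq, hp, hq⟩ := hG.exists_two_mem_commonNeighbors hv hvA hwv.symm hvw
    rw [← card_pair hpq]
    refine card_le_card fun z hz => ?_
    rcases mem_insert.1 hz with rfl | hz
    · exact (mem_bipartiteBelow _).2 ⟨(G.mem_neighborFinset _ _).2 hp.1, hp.2.symm⟩
    · rw [mem_singleton.1 hz]
      exact (mem_bipartiteBelow _).2 ⟨(G.mem_neighborFinset _ _).2 hq.1, hq.2.symm⟩
  have hsub : ∀ s, ↑(S.bipartiteAbove G.Adj s) ⊆ G.commonNeighbors s a := fun s z hz => by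
    obtain ⟨hzS, hsz⟩ := (mem_bipartiteAbove _).1 hz
    exact ⟨hsz, (G.mem_neighborFinset _ _).1 (mem_sdiff.1 hzS).1⟩
  have hone : ∀ s, G.Adj s a → #(S.bipartiteAbove G.Adj s) ≤ 1 := fun s hsa =>
    hG.card_le_one_of_subset_commonNeighbors hsa (hsub s)
  have habove : ∀ s ∈ K, #(S.bipartiteAbove G.Adj s) ≤ 2 := by
    intro s hs
    by_cases hsa : G.Adj s a
    · exact (hone s hsa).trans one_le_two
    · have hsa' : s ≠ a := by
        rintro rfl
        exact hva (by simpa [K] using hs)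
      exact hG.card_le_two_of_subset_commonNeighbors hsa' hsa (hsub s)
  have hsum := Finset.sum_add_two_le_two_mul_card (by simpa [K] using hx.1)
    (by simpa [K] using hy.1) hxy habove (hone x hx.2.symm) (hone y hy.2.symm)
  have hlow := card_nsmul_le_sum S _ 2 hbelow
  rw [sum_card_bipartiteAbove_eq_sum_card_bipartiteBelow] at hsum
  simp only [smul_eq_mul] at hlow
  omega

end UniquelySaturated

theorem stmt9 {V : Type*} [Fintype V] (G : SimpleGraph V)
    (hsat : UniquelySaturated diamond G)
    (htri : ∃ a b c : V, G.Adj a b ∧ G.Adj a c ∧ G.Adj b c) :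
    ∀ v : V, v ∈ triangleVerts G ∨ ∃ a ∈ triangleVerts G, G.Adj v a := by
  classical
  intro v
  by_contra! hfar
  obtain ⟨hv, hvA⟩ := hfar
  obtain ⟨a, b, c, hab, hac, hbc⟩ := htri
  have ha := mem_triangleVerts hab hac hbc
  obtain ⟨x, y, hxy, hx, hy⟩ := hsat.exists_two_mem_commonNeighbors hv hvA
    (fun h => hv (h ▸ ha)) (hvA a ha)
  have h₁ := hsat.card_neighborFinset_le_card_sdiff_add_one hv hx.1
  have h₂ := hsat.card_sdiff_closedNeighborFinset_add_one_le hv hvA hx hy hxy hab hac hbc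
  have h₃ := hsat.card_sdiff_closedNeighborFinset_lt hv hvA (hvA a ha) hx hy hxy
  omega
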